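/- arXiv:2512.10387 — 4 statements merged into one kernel-verified Lean document; each statement's English description precedes it below -/
import Mathlib

section
/- Let r_u, r_v, r_w > 0 and let Θ_uv, Θ_vw, Θ_uw ∈ [0, π/2]. Define l_uv = sqrt(r_u² + r_v² + 2 r_u r_v cos Θ_uv) and similarly for the other two pairs. Then the three lengths l_uv, l_vw, l_uw satisfy the strict triangle inequalities, so there exists a Euclidean triangle with these side lengths. -/
/-!
With nonobtuse overlap angles, `r_u² + r_v² ≤ l_uv² ≤ (r_u + r_v)²`, so `l_uv` exceeds both
radii and is at most their sum. Hence `l_uw ≤ r_u + r_w < l_uv + l_vw`, and likewise for the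
other two sides.
-/


/-- Edge length of a pair of overlapping circles with radii `ru, rv` and overlap angle `Θ`. -/
noncomputable def elen (ru rv Θ : ℝ) : ℝ :=
  Real.sqrt (ru ^ 2 + rv ^ 2 + 2 * ru * rv * Real.cos Θ)

lemma elen_comm (a b Θ : ℝ) : elen a b Θ = elen b a Θ := by
  unfold elen
  ring_nf

lemma elen_le_add {a b : ℝ} (ha : 0 ≤ a) (hb : 0 ≤ b) (Θ : ℝ) : elen a b Θ ≤ a + b := by
  refine Real.sqrt_le_iff.mpr ⟨by positivity, ?_⟩
  nlinarith [mul_nonneg ha hb, Real.cos_le_one Θ]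

lemma lt_elen_left {a b Θ : ℝ} (ha : 0 ≤ a) (hb : 0 < b) (hΘ : 0 ≤ Real.cos Θ) :
    a < elen a b Θ := by
  refine (Real.lt_sqrt ha).mpr ?_
  nlinarith [mul_nonneg (mul_nonneg ha hb.le) hΘ]

lemma lt_elen_right {a b Θ : ℝ} (ha : 0 < a) (hb : 0 ≤ b) (hΘ : 0 ≤ Real.cos Θ) :
    b < elen a b Θ :=
  elen_comm a b Θ ▸ lt_elen_left hb ha hΘ

lemma elen_lt_elen_add_elen {a b c Θab Θbc Θac : ℝ} (ha : 0 ≤ a) (hb : 0 < b) (hc : 0 ≤ c)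
    (hab : 0 ≤ Real.cos Θab) (hbc : 0 ≤ Real.cos Θbc) :
    elen a c Θac < elen a b Θab + elen b c Θbc :=
  calc elen a c Θac ≤ a + c := elen_le_add ha hc Θac
    _ < elen a b Θab + elen b c Θbc :=
      add_lt_add (lt_elen_left ha hb hab) (lt_elen_right hb hc hbc)

lemma cos_nonneg_of_mem_Icc_zero_pi_div_two {Θ : ℝ} (h : Θ ∈ Set.Icc 0 (Real.pi / 2)) :
    0 ≤ Real.cos Θ :=
  Real.cos_nonneg_of_mem_Icc ⟨by linarith [h.1, Real.pi_pos], h.2⟩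

theorem stmt_2 (ru rv rw Θuv Θvw Θuw : ℝ)
    (hru : 0 < ru) (hrv : 0 < rv) (hrw : 0 < rw)
    (huv : Θuv ∈ Set.Icc 0 (Real.pi / 2)) (hvw : Θvw ∈ Set.Icc 0 (Real.pi / 2))
    (huw : Θuw ∈ Set.Icc 0 (Real.pi / 2)) :
    elen ru rv Θuv < elen rv rw Θvw + elen ru rw Θuw ∧
    elen rv rw Θvw < elen ru rv Θuv + elen ru rw Θuw ∧
    elen ru rw Θuw < elen ru rv Θuv + elen rv rw Θvw := by
  have cuv := cos_nonneg_of_mem_Icc_zero_pi_div_two huv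
  have cvw := cos_nonneg_of_mem_Icc_zero_pi_div_two hvw
  have cuw := cos_nonneg_of_mem_Icc_zero_pi_div_two huw
  refine ⟨?_, ?_, elen_lt_elen_add_elen hru.le hrv hrw.le cuv cvw⟩
  · have h := elen_lt_elen_add_elen (Θac := Θuv) hru.le hrw hrv.le cuw cvw
    rwa [elen_comm rw rv, add_comm] at h
  · have h := elen_lt_elen_add_elen (Θac := Θvw) hrv.le hru hrw.le cuv cuw
    rwa [elen_comm rv ru] at h
end

section
/- Let r_u, r_v, r_w > 0 and Θ_uv, Θ_vw, Θ_uw ∈ [0, π) such that I_u^{vw} ≥ 0, I_v^{uw} ≥ 0 and I_w^{uv} ≥ 0, where I_u^{vw} = cos Θ_vw + cos Θ_uv cos Θ_uw (and similarly for the others). Then the lengths l_uv, l_vw, l_uw defined by l_uv = sqrt(r_u² + r_v² + 2 r_u r_v cos Θ_uv) (and similarly) satisfy the triangle inequalities. -/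
open Real

lemma elen_comm_s3 (ru rv Θ : ℝ) : elen ru rv Θ = elen rv ru Θ := by
  unfold elen
  ring_nf

lemma elen_sq {ru rv : ℝ} (hru : 0 ≤ ru) (hrv : 0 ≤ rv) (Θ : ℝ) :
    elen ru rv Θ ^ 2 = ru ^ 2 + rv ^ 2 + 2 * ru * rv * cos Θ := by
  refine sq_sqrt ?_
  have hcos : 0 ≤ 1 + cos Θ := by linarith [neg_one_le_cos Θ]
  nlinarith [sq_nonneg (ru - rv), mul_nonneg (mul_nonneg hru hrv) hcos]

lemma sq_le_mul_of_overlap {ru rv rw Θuv Θvw Θuw : ℝ}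
    (hru : 0 ≤ ru) (hrv : 0 ≤ rv) (hrw : 0 ≤ rw)
    (hIu : 0 ≤ cos Θvw + cos Θuv * cos Θuw)
    (hIv : 0 ≤ cos Θuw + cos Θuv * cos Θvw)
    (hIw : 0 ≤ cos Θuv + cos Θuw * cos Θvw) :
    (ru * rv * cos Θuv - rw ^ 2 - rv * rw * cos Θvw - ru * rw * cos Θuw) ^ 2 ≤
      (rv ^ 2 + rw ^ 2 + 2 * rv * rw * cos Θvw) * (ru ^ 2 + rw ^ 2 + 2 * ru * rw * cos Θuw) := by
  have expansion :
      (rv ^ 2 + rw ^ 2 + 2 * rv * rw * cos Θvw) * (ru ^ 2 + rw ^ 2 + 2 * ru * rw * cos Θuw) -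
        (ru * rv * cos Θuv - rw ^ 2 - rv * rw * cos Θvw - ru * rw * cos Θuw) ^ 2 =
      (ru * rv * sin Θuv) ^ 2 + (rv * rw * sin Θvw) ^ 2 + (ru * rw * sin Θuw) ^ 2 +
        2 * ru ^ 2 * rv * rw * (cos Θvw + cos Θuv * cos Θuw) +
        2 * ru * rv ^ 2 * rw * (cos Θuw + cos Θuv * cos Θvw) +
        2 * ru * rv * rw ^ 2 * (cos Θuv + cos Θuw * cos Θvw) := by
    simp only [mul_pow, sin_sq]
    ring
  have hu : 0 ≤ 2 * ru ^ 2 * rv * rw * (cos Θvw + cos Θuv * cos Θuw) :=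
    mul_nonneg (by positivity) hIu
  have hv : 0 ≤ 2 * ru * rv ^ 2 * rw * (cos Θuw + cos Θuv * cos Θvw) :=
    mul_nonneg (by positivity) hIv
  have hw : 0 ≤ 2 * ru * rv * rw ^ 2 * (cos Θuv + cos Θuw * cos Θvw) :=
    mul_nonneg (by positivity) hIw
  linarith [sq_nonneg (ru * rv * sin Θuv), sq_nonneg (rv * rw * sin Θvw),
    sq_nonneg (ru * rw * sin Θuw)]

theorem elen_le_elen_add_elen {ru rv rw Θuv Θvw Θuw : ℝ}
    (hru : 0 ≤ ru) (hrv : 0 ≤ rv) (hrw : 0 ≤ rw)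
    (hIu : 0 ≤ cos Θvw + cos Θuv * cos Θuw)
    (hIv : 0 ≤ cos Θuw + cos Θuv * cos Θvw)
    (hIw : 0 ≤ cos Θuv + cos Θuw * cos Θvw) :
    elen ru rv Θuv ≤ elen rv rw Θvw + elen ru rw Θuw := by
  set p := elen rv rw Θvw
  set q := elen ru rw Θuw
  have hp : p ^ 2 = rv ^ 2 + rw ^ 2 + 2 * rv * rw * cos Θvw := elen_sq hrv hrw Θvw
  have hq : q ^ 2 = ru ^ 2 + rw ^ 2 + 2 * ru * rw * cos Θuw := elen_sq hru hrw Θuw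
  have hp0 : 0 ≤ p := sqrt_nonneg _
  have hq0 : 0 ≤ q := sqrt_nonneg _
  have hpq : ru * rv * cos Θuv - rw ^ 2 - rv * rw * cos Θvw - ru * rw * cos Θuw ≤ p * q := by
    refine (le_abs_self _).trans (abs_le_of_sq_le_sq ?_ (mul_nonneg hp0 hq0))
    rw [mul_pow, hp, hq]
    exact sq_le_mul_of_overlap hru hrv hrw hIu hIv hIw
  refine sqrt_le_iff.mpr ⟨add_nonneg hp0 hq0, ?_⟩
  rw [add_sq]
  linarith

theorem stmt_3_general (ru rv rw Θuv Θvw Θuw : ℝ)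
    (hru : 0 < ru) (hrv : 0 < rv) (hrw : 0 < rw)
    (hIu : 0 ≤ Real.cos Θvw + Real.cos Θuv * Real.cos Θuw)
    (hIv : 0 ≤ Real.cos Θuw + Real.cos Θuv * Real.cos Θvw)
    (hIw : 0 ≤ Real.cos Θuv + Real.cos Θuw * Real.cos Θvw) :
    elen ru rv Θuv ≤ elen rv rw Θvw + elen ru rw Θuw ∧
    elen rv rw Θvw ≤ elen ru rv Θuv + elen ru rw Θuw ∧
    elen ru rw Θuw ≤ elen ru rv Θuv + elen rv rw Θvw := by
  refine ⟨elen_le_elen_add_elen hru.le hrv.le hrw.le hIu hIv hIw, ?_, ?_⟩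
  · have h := elen_le_elen_add_elen (Θuv := Θvw) (Θvw := Θuw) (Θuw := Θuv) hrv.le hrw.le hru.le
      (by rwa [mul_comm]) (by rwa [mul_comm]) hIu
    rwa [elen_comm_s3 rw ru, elen_comm_s3 rv ru, add_comm] at h
  · have h := elen_le_elen_add_elen (Θuv := Θuw) (Θvw := Θvw) (Θuw := Θuv) hru.le hrw.le hrv.le
      (by rwa [mul_comm]) hIw hIv
    rwa [elen_comm_s3 rw rv, add_comm] at h

theorem stmt_3 (ru rv rw Θuv Θvw Θuw : ℝ)
    (hru : 0 < ru) (hrv : 0 < rv) (hrw : 0 < rw)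
    (huv : Θuv ∈ Set.Ico 0 Real.pi) (hvw : Θvw ∈ Set.Ico 0 Real.pi)
    (huw : Θuw ∈ Set.Ico 0 Real.pi)
    (hIu : 0 ≤ Real.cos Θvw + Real.cos Θuv * Real.cos Θuw)
    (hIv : 0 ≤ Real.cos Θuw + Real.cos Θuv * Real.cos Θvw)
    (hIw : 0 ≤ Real.cos Θuv + Real.cos Θuw * Real.cos Θvw) :
    elen ru rv Θuv ≤ elen rv rw Θvw + elen ru rw Θuw ∧
    elen rv rw Θvw ≤ elen ru rv Θuv + elen ru rw Θuw ∧
    elen ru rw Θuw ≤ elen ru rv Θuv + elen rv rw Θvw :=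
  stmt_3_general ru rv rw Θuv Θvw Θuw hru hrv hrw hIu hIv hIw
end

section
/- In the setting of the previous monotonicity: with nonobtuse overlap angles and the triangle of side lengths l_uv, l_vw, l_uw, the angle α_u at vertex u tends to 0 as r_u → ∞ (with r_v, r_w fixed). -/
/-- Angle at the vertex `u` of the triangle of centers, by the law of cosines. -/
noncomputable def alphaU (ru rv rw Θuv Θvw Θuw : ℝ) : ℝ :=
  Real.arccos (((elen ru rv Θuv) ^ 2 + (elen ru rw Θuw) ^ 2 - (elen rv rw Θvw) ^ 2) /
    (2 * elen ru rv Θuv * elen ru rw Θuw))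

/-! As `r_u → ∞`, both sides `l_uv`, `l_uw` at `u` are `r_u (1 + o(1))` while the opposite side
`l_vw` stays fixed, so the law-of-cosines quotient tends to `(1 + 1 - 0) / (2 · 1 · 1) = 1`
and `α_u = arccos(…)` tends to `arccos 1 = 0`. -/

open Filter Real Topology

lemma tendsto_sq_add_mul_add_div_sq (b c : ℝ) :
    Tendsto (fun x : ℝ => (x ^ 2 + b * x + c) / x ^ 2) atTop (𝓝 1) := by
  have h : Tendsto (fun t : ℝ => 1 + b * t + c * t ^ 2) (𝓝 0) (𝓝 1) := by
    have hc : Continuous (fun t : ℝ => 1 + b * t + c * t ^ 2) := by fun_prop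
    simpa using hc.tendsto 0
  refine (h.comp tendsto_inv_atTop_zero).congr' ?_
  filter_upwards [eventually_ne_atTop 0] with x hx
  simp only [Function.comp_apply]
  field_simp

lemma tendsto_elen_div_self (r Θ : ℝ) :
    Tendsto (fun ru : ℝ => elen ru r Θ / ru) atTop (𝓝 1) := by
  have h := (continuous_sqrt.tendsto 1).comp (tendsto_sq_add_mul_add_div_sq (2 * r * cos Θ) (r ^ 2))
  rw [sqrt_one] at h
  refine h.congr' ?_
  filter_upwards [eventually_gt_atTop 0] with ru hru
  rw [Function.comp_apply, sqrt_div' _ (sq_nonneg ru), sqrt_sq hru.le, elen]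
  ring_nf

theorem stmt_11_general (rv rw Θuv Θvw Θuw : ℝ) :
    Filter.Tendsto (fun ru => alphaU ru rv rw Θuv Θvw Θuw) Filter.atTop (nhds 0) := by
  have huv := tendsto_elen_div_self rv Θuv
  have huw := tendsto_elen_div_self rw Θuw
  have hvw : Tendsto (fun ru : ℝ => elen rv rw Θvw ^ 2 / ru ^ 2) atTop (𝓝 0) :=
    tendsto_const_nhds.div_atTop (tendsto_pow_atTop two_ne_zero)
  have hcos := (((huv.pow 2).add (huw.pow 2)).sub hvw).div ((huv.const_mul 2).mul huw)
    (by norm_num)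
  have h := (continuous_arccos.tendsto _).comp hcos
  norm_num [arccos_one] at h
  refine h.congr' ?_
  filter_upwards [eventually_ne_atTop 0] with ru hru
  simp only [Function.comp_apply, Pi.div_apply, alphaU]
  congr 1
  field_simp

theorem stmt_11 (rv rw Θuv Θvw Θuw : ℝ) (hrv : 0 < rv) (hrw : 0 < rw)
    (huv : Θuv ∈ Set.Icc 0 (Real.pi / 2)) (hvw : Θvw ∈ Set.Icc 0 (Real.pi / 2))
    (huw : Θuw ∈ Set.Icc 0 (Real.pi / 2)) :
    Filter.Tendsto (fun ru => alphaU ru rv rw Θuv Θvw Θuw) Filter.atTop (nhds 0) :=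
  stmt_11_general rv rw Θuv Θvw Θuw
end

section
/- Let f : ℝⁿ → ℝ be a C¹ function that attains its minimum only at x*, with ∇f(x*) = 0 and no other critical points, and suppose f is coercive. Then for any initial point x⁰ and any ε > 0 there exists a step size η > 0 and k ∈ ℕ such that the gradient descent iterates x^{(k+1)} = x^{(k)} − η ∇f(x^{(k)}) satisfy ‖x^{(k)} − x*‖ < ε, provided f additionally has Lipschitz continuous gradient on the sublevel set {f ≤ f(x⁰)}. -/
/-!
Let `K` be a Lipschitz constant of `∇f` on the sublevel set `S = {f ≤ f x0}` and `η = 1 / (K + 1)`.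
The descent inequality `f (x - η ∇f x) ≤ f x - η / 2 ‖∇f x‖²` holds at every point of `S`, even
though `∇f` is only Lipschitz on `S`: along the segment from `x` to `x - η ∇f x` the function `f`
cannot rise above `f x`, so the segment never leaves `S`. Hence the iterates stay in `S` and
`f (x k) ≤ f x0 - η / 2 ∑_{i<k} ‖∇f (x i)‖²`. By coercivity `S` is compact; if all iterates stayed
`ε`-far from `xstar`, they would lie in a compact set free of critical points, where
`‖∇f‖ ≥ δ > 0`, and `f (x k)` would eventually drop below `f xstar = min f`.
-/

/-- Gradient descent iterates with constant step size `η` starting at `x0`. -/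
noncomputable def gdSeq {n : ℕ} (f : EuclideanSpace ℝ (Fin n) → ℝ) (η : ℝ)
    (x0 : EuclideanSpace ℝ (Fin n)) : ℕ → EuclideanSpace ℝ (Fin n)
  | 0 => x0
  | k + 1 => gdSeq f η x0 k - η • gradient f (gdSeq f η x0 k)

open InnerProductSpace Set Filter Topology

lemma isCompact_setOf_le_of_tendsto_cocompact {X α : Type*} [TopologicalSpace X]
    [LinearOrder α] [NoMaxOrder α] [TopologicalSpace α] [ClosedIicTopology α] {f : X → α}
    (hf : Continuous f) (hcoercive : Tendsto f (cocompact X) atTop) (c : α) :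
    IsCompact {x | f x ≤ c} := by
  obtain ⟨t, ht, hsub⟩ := mem_cocompact'.1 (hcoercive.eventually (eventually_gt_atTop c))
  exact ht.of_isClosed_subset (isClosed_Iic.preimage hf) fun x hx => hsub (not_lt.2 hx)

lemma LipschitzOnWith.sq_norm_sub_mul_le_inner {E : Type*} [NormedAddCommGroup E]
    [InnerProductSpace ℝ E] {G : E → E} {K : NNReal} {s : Set E} {x y : E}
    (hG : LipschitzOnWith K G s) (hx : x ∈ s) (hy : y ∈ s) :
    ‖G x‖ ^ 2 - K * ‖y - x‖ * ‖G x‖ ≤ ⟪G y, G x⟫_ℝ := by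
  have hdiff : ‖G y - G x‖ ≤ K * ‖y - x‖ := hG.norm_sub_le_of_le hy hx le_rfl
  have hsplit : ⟪G y, G x⟫_ℝ = ‖G x‖ ^ 2 + ⟪G y - G x, G x⟫_ℝ := by
    rw [inner_sub_left, real_inner_self_eq_norm_sq]; ring
  have hcs : -(‖G y - G x‖ * ‖G x‖) ≤ ⟪G y - G x, G x⟫_ℝ :=
    (abs_le.1 (abs_real_inner_le_norm _ _)).1
  nlinarith [norm_nonneg (G x)]

section Gradient

variable {E : Type*} [NormedAddCommGroup E] [InnerProductSpace ℝ E] [CompleteSpace E]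
  {f : E → ℝ}

lemma ContDiff.continuous_gradient (hf : ContDiff ℝ 1 f) : Continuous (gradient f) :=
  (toDual ℝ E).symm.continuous.comp (hf.continuous_fderiv one_ne_zero)

lemma DifferentiableAt.hasDerivAt_sub_smul {x v : E} {t : ℝ}
    (hf : DifferentiableAt ℝ f (x - t • v)) :
    HasDerivAt (fun s : ℝ => f (x - s • v)) (-⟪gradient f (x - t • v), v⟫_ℝ) t := by
  have hline : HasDerivAt (fun s : ℝ => x - s • v) (-v) t := by
    simpa using ((hasDerivAt_id t).smul_const v).const_sub x
  have := (hasGradientAt_iff_hasFDerivAt.1 hf.hasGradientAt).comp_hasDerivAt t hline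
  rwa [map_neg, toDual_apply_apply] at this

theorem apply_sub_smul_gradient_le {K : NNReal} {c η : ℝ} {x : E} (hf : Differentiable ℝ f)
    (hK : LipschitzOnWith K (gradient f) {y | f y ≤ c}) (hx : f x ≤ c) (hη : 0 < η)
    (hηK : K * η ≤ 1) :
    f (x - η • gradient f x) ≤ f x - η / 2 * ‖gradient f x‖ ^ 2 := by
  set g := gradient f x
  rcases eq_or_ne g 0 with hg | hg
  · simp [hg]
  have hg2 : 0 < ‖g‖ ^ 2 := by positivity
  set h : ℝ → ℝ := fun t => f (x - t • (η • g))
  set h' : ℝ → ℝ := fun t => -⟪gradient f (x - t • (η • g)), η • g⟫_ℝ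
  have hderiv : ∀ t, HasDerivAt h (h' t) t := fun t => (hf _).hasDerivAt_sub_smul
  have hcont : ContinuousOn h (Icc 0 1) := fun t _ => (hderiv t).continuousAt.continuousWithinAt
  have hderiv' : ∀ t ∈ Ico (0 : ℝ) 1, HasDerivWithinAt h (h' t) (Ici t) t :=
    fun t _ => (hderiv t).hasDerivWithinAt
  have hslope : ∀ t, 0 ≤ t → h t ≤ c → h' t ≤ -(η * (1 - t) * ‖g‖ ^ 2) := by
    intro t ht hht
    have hinner := hK.sq_norm_sub_mul_le_inner hx hht
    have hdist : ‖x - t • (η • g) - x‖ = t * η * ‖g‖ := by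
      rw [sub_sub_cancel_left, norm_neg, norm_smul, norm_smul, Real.norm_of_nonneg ht,
        Real.norm_of_nonneg hη.le, mul_assoc]
    rw [hdist] at hinner
    have hKt : K * η * t ≤ t := by nlinarith
    simp only [h', real_inner_smul_right]
    nlinarith [mul_le_mul_of_nonneg_left hinner hη.le, mul_le_mul_of_nonneg_right hKt hg2.le]
  -- `h` cannot cross the level `f x` from below, since its slope is negative there; so the
  -- segment stays in the sublevel set, where the Lipschitz bound on `∇f` is available
  have hstay : ∀ t ∈ Icc (0 : ℝ) 1, h t ≤ f x :=
    image_le_of_deriv_right_lt_deriv_boundary hcont hderiv' (by simp [h])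
      (fun _ => hasDerivAt_const _ (f x)) fun t ht hht => by
        have hpos : 0 < η * (1 - t) * ‖g‖ ^ 2 := mul_pos (mul_pos hη (sub_pos.2 ht.2)) hg2
        linarith [hslope t ht.1 (hht.le.trans hx)]
  have hdecrease := image_le_of_deriv_right_le_deriv_boundary (a := 0) (b := 1) hcont hderiv'
    (B := fun t => f x - η * ‖g‖ ^ 2 * (t - t ^ 2 / 2)) (B' := fun t => -(η * (1 - t) * ‖g‖ ^ 2))
    (by simp [h]) (by fun_prop) (fun t _ => by
      refine (((hasDerivAt_id t).sub ((hasDerivAt_pow 2 t).div_const 2)).const_mul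
        (η * ‖g‖ ^ 2) |>.const_sub (f x) |>.hasDerivWithinAt).congr_deriv ?_
      simp only [Nat.cast_ofNat]; ring)
    (fun t ht => hslope t ht.1 ((hstay t (Ico_subset_Icc_self ht)).trans hx))
    (right_mem_Icc.2 zero_le_one)
  simp only [h, one_smul] at hdecrease
  linarith

end Gradient

lemma apply_gdSeq_le_sub_sum {n : ℕ} {f : EuclideanSpace ℝ (Fin n) → ℝ} {K : NNReal} {η : ℝ}
    {x0 : EuclideanSpace ℝ (Fin n)} (hf : Differentiable ℝ f)
    (hK : LipschitzOnWith K (gradient f) {y | f y ≤ f x0}) (hη : 0 < η) (hηK : K * η ≤ 1)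
    (k : ℕ) :
    f (gdSeq f η x0 k) ≤
      f x0 - η / 2 * ∑ i ∈ Finset.range k, ‖gradient f (gdSeq f η x0 i)‖ ^ 2 := by
  induction k with
  | zero => simp [gdSeq]
  | succ k ih =>
    have hstep := apply_sub_smul_gradient_le hf hK
      (ih.trans (sub_le_self _ (by positivity))) hη hηK
    rw [gdSeq, Finset.sum_range_succ]
    linarith

theorem stmt_12_general {n : ℕ} (f : EuclideanSpace ℝ (Fin n) → ℝ)
    (xstar x0 : EuclideanSpace ℝ (Fin n))
    (hf : ContDiff ℝ 1 f)
    (hmin : ∀ x, f xstar ≤ f x)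
    (hcrit : ∀ x, gradient f x = 0 → x = xstar)
    (hcoercive : Filter.Tendsto f (Filter.cocompact _) Filter.atTop)
    (hlip : ∃ K : NNReal, LipschitzOnWith K (gradient f) {x | f x ≤ f x0})
    (ε : ℝ) (hε : 0 < ε) :
    ∃ η > 0, ∃ k : ℕ, ‖gdSeq f η x0 k - xstar‖ < ε := by
  obtain ⟨K, hK⟩ := hlip
  set η : ℝ := ((K : ℝ) + 1)⁻¹
  have hη : 0 < η := by positivity
  have hηK : K * η ≤ 1 := by
    rw [← div_eq_mul_inv, div_le_one (by positivity)]; linarith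
  refine ⟨η, hη, ?_⟩
  by_contra! hfar
  have hcompact : IsCompact ({y | f y ≤ f x0} ∩ {y | ε ≤ ‖y - xstar‖}) :=
    (isCompact_setOf_le_of_tendsto_cocompact hf.continuous hcoercive _).inter_right
      (isClosed_le continuous_const (by fun_prop))
  have hsum (k : ℕ) := apply_gdSeq_le_sub_sum (hf.differentiable one_ne_zero) hK hη hηK k
  have hlevel (k : ℕ) : f (gdSeq f η x0 k) ≤ f x0 :=
    (hsum k).trans (sub_le_self _ (by positivity))
  -- `xstar` is the only critical point, so `‖∇f‖` is bounded below on this compact set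
  obtain ⟨δ, hδ, hδle⟩ := hcompact.exists_forall_le' hf.continuous_gradient.norm.continuousOn
    fun y hy => norm_pos_iff.2 fun h0 => by
      have := hy.2
      simp [hcrit y h0, hε.not_ge] at this
  have hlinear (k : ℕ) :
      k * δ ^ 2 ≤ ∑ i ∈ Finset.range k, ‖gradient f (gdSeq f η x0 i)‖ ^ 2 := by
    simpa using Finset.card_nsmul_le_sum (Finset.range k) _ _ fun i _ =>
      pow_le_pow_left₀ hδ.le (hδle _ ⟨hlevel i, hfar i⟩) 2
  obtain ⟨k, hk⟩ := exists_nat_gt ((f x0 - f xstar) / (η / 2 * δ ^ 2))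
  rw [div_lt_iff₀ (by positivity)] at hk
  nlinarith [hsum k, hlinear k, hmin (gdSeq f η x0 k)]

theorem stmt_12 {n : ℕ} (f : EuclideanSpace ℝ (Fin n) → ℝ)
    (xstar x0 : EuclideanSpace ℝ (Fin n))
    (hf : ContDiff ℝ 1 f)
    (hmin : ∀ x, f xstar ≤ f x)
    (hgrad : gradient f xstar = 0)
    (hcrit : ∀ x, gradient f x = 0 → x = xstar)
    (hcoercive : Filter.Tendsto f (Filter.cocompact _) Filter.atTop)
    (hlip : ∃ K : NNReal, LipschitzOnWith K (gradient f) {x | f x ≤ f x0})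
    (ε : ℝ) (hε : 0 < ε) :
    ∃ η > 0, ∃ k : ℕ, ‖gdSeq f η x0 k - xstar‖ < ε :=
  stmt_12_general f xstar x0 hf hmin hcrit hcoercive hlip ε hε
end
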